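/- arXiv:2205.00553 — 3 statements merged into one kernel-verified Lean document; each statement's English description precedes it below -/
import Mathlib

section
/- Let 1 ≤ a < r be coprime integers with Hirzebruch–Jung continued fraction r/a = [α_1, ..., α_n], and let 1 ≤ a′ < r be the integer with a·a′ ≡ 1 (mod r). Then r/a′ = [α_n, ..., α_1], i.e. the continued fraction of r/a′ is the reversal of that of r/a. -/
/-!
With `M(α) = !![α, -1; 1, 0]`, the product `M(α₁)⋯M(αₙ) = !![p, -s; q, -t]` has determinant
`1` and satisfies `[α₁, ..., αₙ] = p / q`. Since `M(α)ᵀ = D M(α) D` for `D = diag(1, -1)`,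
the product for the reversed list is `D (M(α₁)⋯M(αₙ))ᵀ D = !![p, -q; s, -t]`, so
`[αₙ, ..., α₁] = p / s`. Comparing reduced fractions gives `p = r`, `q = a`; the determinant
says `a s ≡ 1 (mod r)`, and `0 ≤ s < r` because `s` is the denominator of the reversed
fraction, so `s = a'`.
-/

/-- Hirzebruch–Jung continued fraction `[α₁, ..., αₙ]`:
`[αₙ] = αₙ` and `[α₁, ..., αₙ] = α₁ - 1/[α₂, ..., αₙ]`. -/
def hjcf : List ℕ → ℚ
  | [] => 0
  | a :: l => if l.isEmpty then (a : ℚ) else (a : ℚ) - 1 / hjcf l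

open Matrix

-- Also for `l = []`, as `hjcf [] = 0` and `0⁻¹ = 0`.
theorem hjcf_cons (a : ℕ) (l : List ℕ) : hjcf (a :: l) = a - (hjcf l)⁻¹ := by
  cases l <;> simp [hjcf]

def hjMatrix (α : ℕ) : Matrix (Fin 2) (Fin 2) ℤ := !![(α : ℤ), -1; 1, 0]

def hjProd (L : List ℕ) : Matrix (Fin 2) (Fin 2) ℤ := (L.map hjMatrix).prod

theorem hjProd_nil : hjProd [] = 1 := rfl

theorem hjProd_cons (a : ℕ) (l : List ℕ) : hjProd (a :: l) = hjMatrix a * hjProd l := rfl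

theorem det_hjProd (L : List ℕ) : (hjProd L).det = 1 := by
  induction L with
  | nil => simp [hjProd_nil]
  | cons a l ih =>
    rw [hjProd_cons, det_mul, ih, mul_one, hjMatrix, det_fin_two_of]
    simp

theorem hjMatrix_transpose (α : ℕ) :
    (hjMatrix α)ᵀ = !![1, 0; 0, -1] * hjMatrix α * !![1, 0; 0, -1] := by
  ext i j; fin_cases i <;> fin_cases j <;> simp [hjMatrix]

theorem hjProd_append (l₁ l₂ : List ℕ) : hjProd (l₁ ++ l₂) = hjProd l₁ * hjProd l₂ := by
  simp [hjProd]

theorem hjProd_reverse (L : List ℕ) :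
    hjProd L.reverse = !![1, 0; 0, -1] * (hjProd L)ᵀ * !![1, 0; 0, -1] := by
  have hD : (!![1, 0; 0, -1] : Matrix (Fin 2) (Fin 2) ℤ) * !![1, 0; 0, -1] = 1 := by
    simp [one_fin_two]
  induction L with
  | nil => simp [hjProd_nil, hD]
  | cons a l ih =>
    rw [List.reverse_cons, hjProd_append, ih, hjProd_cons a l, transpose_mul, hjMatrix_transpose,
      hjProd_cons, hjProd_nil, Matrix.mul_one]
    simp only [Matrix.mul_assoc, hD, Matrix.mul_one]

theorem hjProd_reverse_zero_zero (L : List ℕ) : hjProd L.reverse 0 0 = hjProd L 0 0 := by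
  simp [hjProd_reverse, mul_apply, Fin.sum_univ_two, -cons_mul]

theorem hjProd_reverse_one_zero (L : List ℕ) : hjProd L.reverse 1 0 = -hjProd L 0 1 := by
  simp [hjProd_reverse, mul_apply, Fin.sum_univ_two, -cons_mul]

theorem hjProd_cons_zero_zero (a : ℕ) (l : List ℕ) :
    hjProd (a :: l) 0 0 = a * hjProd l 0 0 - hjProd l 1 0 := by
  simp [hjProd_cons, hjMatrix, mul_apply, sub_eq_add_neg]

theorem hjProd_cons_one_zero (a : ℕ) (l : List ℕ) : hjProd (a :: l) 1 0 = hjProd l 0 0 := by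
  simp [hjProd_cons, hjMatrix, mul_apply]

theorem hjProd_bounds {L : List ℕ} (hL : ∀ x ∈ L, 2 ≤ x) :
    0 ≤ hjProd L 1 0 ∧ hjProd L 1 0 < hjProd L 0 0 := by
  induction L with
  | nil => simp [hjProd_nil]
  | cons a l ih =>
    obtain ⟨hq, hqp⟩ := ih fun x hx => hL x (List.mem_cons_of_mem a hx)
    have ha : (2 : ℤ) ≤ a := by exact_mod_cast hL a List.mem_cons_self
    rw [hjProd_cons_zero_zero, hjProd_cons_one_zero]
    constructor <;> nlinarith

theorem hjProd_one_zero_pos {L : List ℕ} (hL : ∀ x ∈ L, 2 ≤ x) (hne : L ≠ []) :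
    0 < hjProd L 1 0 := by
  obtain ⟨a, l, rfl⟩ := List.exists_cons_of_ne_nil hne
  rw [hjProd_cons_one_zero]
  have := hjProd_bounds fun x hx => hL x (List.mem_cons_of_mem a hx)
  omega

theorem hjcf_eq_div {L : List ℕ} (hL : ∀ x ∈ L, 2 ≤ x) :
    hjcf L = hjProd L 0 0 / hjProd L 1 0 := by
  induction L with
  | nil => simp [hjcf, hjProd_nil]
  | cons a l ih =>
    have hl : ∀ x ∈ l, 2 ≤ x := fun x hx => hL x (List.mem_cons_of_mem a hx)
    have hp : (hjProd l 0 0 : ℚ) ≠ 0 := by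
      have := hjProd_bounds hl
      exact_mod_cast (by omega : hjProd l 0 0 ≠ 0)
    rw [hjcf_cons, ih hl, hjProd_cons_zero_zero, hjProd_cons_one_zero]
    field_simp
    push_cast
    ring

theorem Int.eq_of_mul_modEq_one {r a x y : ℤ} (hx : a * x ≡ 1 [ZMOD r]) (hy : a * y ≡ 1 [ZMOD r])
    (hx0 : 0 ≤ x) (hxr : x < r) (hy0 : 0 ≤ y) (hyr : y < r) : x = y := by
  have : x ≡ y [ZMOD r] :=
    calc x = x * 1 := (mul_one x).symm
      _ ≡ x * (a * y) [ZMOD r] := hy.symm.mul_left x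
      _ = y * (a * x) := by ring
      _ ≡ y * 1 [ZMOD r] := hx.mul_left y
      _ = y := mul_one y
  rwa [Int.ModEq, Int.emod_eq_of_lt hx0 hxr, Int.emod_eq_of_lt hy0 hyr] at this

theorem hjcf_reverse_general (r a a' : ℕ) (h1 : 1 ≤ a)
    (hcop : Nat.Coprime a r) (h2' : a' < r)
    (hinv : (a * a') % r = 1)
    (L : List ℕ) (hL : ∀ x ∈ L, 2 ≤ x) (hne : L ≠ [])
    (hcf : hjcf L = (r : ℚ) / (a : ℚ)) :
    hjcf L.reverse = (r : ℚ) / (a' : ℚ) := by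
  have hdet : hjProd L 0 0 * hjProd L 1 1 - hjProd L 0 1 * hjProd L 1 0 = 1 := by
    rw [← det_fin_two, det_hjProd]
  obtain ⟨hr, ha⟩ : hjProd L 0 0 = r ∧ hjProd L 1 0 = a := by
    refine Rat.div_int_inj (hjProd_one_zero_pos hL hne) (by omega) ?_ hcop.symm ?_
    · exact Int.isCoprime_iff_gcd_eq_one.mp
        ⟨hjProd L 1 1, -hjProd L 0 1, by linear_combination hdet⟩
    · rw [← hjcf_eq_div hL, hcf]
      simp only [Int.cast_natCast]
  have hL' : ∀ x ∈ L.reverse, 2 ≤ x := fun x hx => hL x (List.mem_reverse.mp hx)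
  have hs : -hjProd L 0 1 = a' := by
    have hbounds := hjProd_bounds hL'
    rw [hjProd_reverse_zero_zero, hjProd_reverse_one_zero, hr] at hbounds
    have hinv' : a * a' ≡ 1 [MOD r] := by rw [Nat.ModEq, hinv, ← hinv, Nat.mod_mod]
    refine Int.eq_of_mul_modEq_one (a := a) ?_ ?_ hbounds.1 hbounds.2 (by omega) (by omega)
    · exact Int.modEq_iff_dvd.mpr ⟨hjProd L 1 1, by rw [← hr, ← ha]; linear_combination -hdet⟩
    · exact_mod_cast Int.natCast_modEq_iff.mpr hinv'
  rw [hjcf_eq_div hL', hjProd_reverse_zero_zero, hjProd_reverse_one_zero, hr, hs, Int.cast_natCast,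
    Int.cast_natCast]

/-- If `r/a = [α₁, ..., αₙ]` and `a·a' ≡ 1 (mod r)`, then
`r/a' = [αₙ, ..., α₁]`. -/
theorem hjcf_reverse (r a a' : ℕ) (h1 : 1 ≤ a) (h2 : a < r)
    (hcop : Nat.Coprime a r) (h1' : 1 ≤ a') (h2' : a' < r)
    (hinv : (a * a') % r = 1)
    (L : List ℕ) (hL : ∀ x ∈ L, 2 ≤ x) (hne : L ≠ [])
    (hcf : hjcf L = (r : ℚ) / (a : ℚ)) :
    hjcf L.reverse = (r : ℚ) / (a' : ℚ) :=
  hjcf_reverse_general r a a' h1 hcop h2' hinv L hL hne hcf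
end

section
/- Let 1 ≤ a < r be coprime with I-series i_0 = r, i_1 = a, ..., i_{n+1} = 0 and continued fraction entries α_1, ..., α_n. In ℤ², set ρ_0 = (0,1), ρ_{n+1} = (r, −a), and define ρ_t = (1/i_{t−1})(ρ_{n+1} + i_t ρ_{t−1}) for t = 1, ..., n. Then each ρ_t lies in ℤ², and for all t = 1, ..., n one has ρ_{t−1} + ρ_{t+1} = α_t ρ_t. -/
/-!
Rather than dividing by `i_{t-1}`, generate the rays by the recurrence
`ρ_{t+1} = α_t ρ_t - ρ_{t-1}` from `ρ_0 = (0,1)`, `ρ_1 = (1,0)`; they are then integral by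
construction. The `i_t` obey the same recurrence, so the Casoratian
`i_t ρ_{t+1} - i_{t+1} ρ_t` is constant, equal to its value `(r, -a)` at `t = 0`. At `t = n`,
where `i_n = 1` and `i_{n+1} = 0`, it equals `ρ_{n+1}`, and at `t - 1` it is the defining formula
of `ρ_t`.
-/

section Casoratian

variable {R M : Type*} [CommRing R] [AddCommGroup M] [Module R M]

theorem casoratian_eq_of_recurrence (c x : ℕ → R) (v : ℕ → M) (N : ℕ)
    (hx : ∀ s, s + 2 ≤ N → x (s + 2) = c (s + 1) * x (s + 1) - x s)
    (hv : ∀ s, v (s + 2) = c (s + 1) • v (s + 1) - v s) :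
    ∀ t, t + 1 ≤ N → x t • v (t + 1) - x (t + 1) • v t = x 0 • v 1 - x 1 • v 0 := by
  intro t ht
  induction t with
  | zero => rfl
  | succ s ih =>
    rw [← ih (by omega), hx s ht, hv s, smul_sub, sub_smul, mul_smul, smul_comm (x (s + 1))]
    abel

end Casoratian

/-- `ρ_1 = (1, 0)` is what the formula `ρ_1 = (ρ_{n+1} + a ρ_0) / r` gives. -/
def resolutionRay (α : ℕ → ℤ) : ℕ → ℤ × ℤ
  | 0 => (0, 1)
  | 1 => (1, 0)
  | t + 2 => α (t + 1) • resolutionRay α (t + 1) - resolutionRay α t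

theorem resolution_rays_integral_general (r a : ℤ) (n : ℕ) (i α : ℕ → ℤ)
    (hi0 : i 0 = r) (hi1 : i 1 = a) (hin : i n = 1) (hin1 : i (n + 1) = 0)
    (hrec : ∀ t : ℕ, 2 ≤ t → t ≤ n + 1 →
      2 ≤ α (t - 1) ∧ i t = α (t - 1) * i (t - 1) - i (t - 2) ∧
        0 ≤ i t ∧ i t < i (t - 1)) :
    ∃ ρ : ℕ → ℤ × ℤ,
      ρ 0 = (0, 1) ∧ ρ (n + 1) = (r, -a) ∧
      (∀ t : ℕ, 1 ≤ t → t ≤ n →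
        i (t - 1) • ρ t = ρ (n + 1) + i t • ρ (t - 1)) ∧
      (∀ t : ℕ, 1 ≤ t → t ≤ n →
        ρ (t - 1) + ρ (t + 1) = α t • ρ t) := by
  set ρ := resolutionRay α
  have hi : ∀ s, s + 2 ≤ n + 1 → i (s + 2) = α (s + 1) * i (s + 1) - i s := fun s hs => by
    simpa using (hrec (s + 2) (by omega) hs).2.1
  have hcasoratian : ∀ t, t + 1 ≤ n + 1 → i t • ρ (t + 1) - i (t + 1) • ρ t = (r, -a) := by
    intro t ht
    rw [casoratian_eq_of_recurrence α i ρ (n + 1) hi (fun _ => rfl) t ht]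
    simp [ρ, resolutionRay, hi0, hi1]
  have hlast : ρ (n + 1) = (r, -a) := by simpa [hin, hin1] using hcasoratian n le_rfl
  refine ⟨ρ, rfl, hlast, fun t ht htn => ?_, fun t ht _ => ?_⟩
  · obtain ⟨s, rfl⟩ := Nat.exists_eq_add_of_le' ht
    rw [hlast, ← hcasoratian s (by omega), Nat.add_sub_cancel]
    abel
  · obtain ⟨s, rfl⟩ := Nat.exists_eq_add_of_le' ht
    simp [ρ, resolutionRay]

/-- The primitive ray generators of the fan of the minimal resolution of the
cyclic quotient singularity `1/r(1,a)`: with `ρ 0 = (0,1)`, `ρ (n+1) = (r,-a)`,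
and `ρ t = (1/i_{t-1})(ρ_{n+1} + i_t ρ_{t-1})`, each `ρ t` is integral, and
`ρ (t-1) + ρ (t+1) = α t • ρ t` for `1 ≤ t ≤ n`. -/
theorem resolution_rays_integral (r a : ℤ) (h1 : 1 ≤ a) (h2 : a < r)
    (hcop : IsCoprime a r) (n : ℕ) (i α : ℕ → ℤ)
    (hi0 : i 0 = r) (hi1 : i 1 = a) (hin : i n = 1) (hin1 : i (n + 1) = 0)
    (hrec : ∀ t : ℕ, 2 ≤ t → t ≤ n + 1 →
      2 ≤ α (t - 1) ∧ i t = α (t - 1) * i (t - 1) - i (t - 2) ∧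
        0 ≤ i t ∧ i t < i (t - 1)) :
    ∃ ρ : ℕ → ℤ × ℤ,
      ρ 0 = (0, 1) ∧ ρ (n + 1) = (r, -a) ∧
      (∀ t : ℕ, 1 ≤ t → t ≤ n →
        i (t - 1) • ρ t = ρ (n + 1) + i t • ρ (t - 1)) ∧
      (∀ t : ℕ, 1 ≤ t → t ≤ n →
        ρ (t - 1) + ρ (t + 1) = α t • ρ t) :=
  resolution_rays_integral_general r a n i α hi0 hi1 hin hin1 hrec
end

section
/- Let I^{1,7} be ℤ^8 with the bilinear form given by the diagonal matrix diag(1, −1, −1, −1, −1, −1, −1, −1), and let κ = (3, −1, −1, −1, −1, −1, −1, −1). Then the set of exceptional vectors, i.e. vectors v with v·κ = −1 and v·v = −1, has exactly 56 elements. -/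
/-!
Write `v = (a, b)` with `b ∈ ℤ⁷`. The two conditions say `∑ bᵢ = -1 - 3a` and `∑ bᵢ² = a² + 1`,
so Cauchy–Schwarz `(∑ bᵢ)² ≤ 7 ∑ bᵢ²` forces `-3 ≤ a ≤ 0`. For each such `a` there is a `c` with
`∑ (bᵢ - c)(bᵢ - c - 1) = 0`; every term is nonnegative, so each `bᵢ` is `c` or `c + 1`, and `b` is
determined by the set of coordinates equal to `c + 1`, whose size `k` is fixed by `∑ bᵢ`.
The four values `a = 0, -1, -2, -3` give `(c, k) = (-1, 6), (0, 2), (0, 5), (1, 1)`, hence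
`7 + 21 + 21 + 7 = 56` vectors: up to sign the classes `Eᵢ`, `H - Eᵢ - Eⱼ`, `2H - ∑_{five} Eᵢ`
and `3H - 2Eᵢ - ∑_{j ≠ i} Eⱼ`.
-/

/-- The bilinear form of the lattice `I^{1,7}`. -/
def qform (v w : Fin 8 → ℤ) : ℤ :=
  ∑ i : Fin 8, (if i = 0 then 1 else -1) * (v i * w i)

/-- The vector corresponding to the canonical class. -/
def kappa : Fin 8 → ℤ := fun i => if i = 0 then 3 else -1

open Finset Matrix

section ShiftedIndicator

variable {ι : Type*} [DecidableEq ι]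

def shiftedIndicator (c : ℤ) (S : Finset ι) (i : ι) : ℤ := c + if i ∈ S then 1 else 0

theorem shiftedIndicator_injective (c : ℤ) :
    Function.Injective (shiftedIndicator (ι := ι) c) := by
  intro S T h
  ext i
  have := congrFun h i
  by_cases hS : i ∈ S <;> by_cases hT : i ∈ T <;> simp_all [shiftedIndicator]

theorem sum_shiftedIndicator [Fintype ι] (c : ℤ) (S : Finset ι) :
    ∑ i, shiftedIndicator c S i = Fintype.card ι * c + #S := by
  simp [shiftedIndicator, sum_add_distrib]

theorem sum_shiftedIndicator_sq [Fintype ι] (c : ℤ) (S : Finset ι) :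
    ∑ i, shiftedIndicator c S i ^ 2 = Fintype.card ι * c ^ 2 + (2 * c + 1) * #S := by
  have h : ∀ i, shiftedIndicator c S i ^ 2 = c ^ 2 + (2 * c + 1) * if i ∈ S then 1 else 0 := by
    intro i
    unfold shiftedIndicator
    split_ifs <;> ring
  simp [h, sum_add_distrib, mul_comm]

theorem exists_eq_shiftedIndicator [Fintype ι] {b : ι → ℤ} {c : ℤ}
    (h : ∑ i, (b i - c) * (b i - c - 1) = 0) : ∃ S, b = shiftedIndicator c S := by
  have hzero := (sum_eq_zero_iff_of_nonneg fun i _ => ?_).1 h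
  · refine ⟨({i | b i = c + 1} : Finset ι), funext fun i => ?_⟩
    rcases mul_eq_zero.1 (hzero i (mem_univ i)) with h | h <;>
      simp only [shiftedIndicator, mem_filter, mem_univ, true_and] <;> omega
  · nlinarith [Int.le_self_sq (b i - c)]

theorem exists_eq_shiftedIndicator_of_sum_of_sum_sq [Fintype ι] {b : ι → ℤ} {c : ℤ} {k : ℕ}
    (hsum : ∑ i, b i = Fintype.card ι * c + k)
    (hsq : ∑ i, b i ^ 2 = Fintype.card ι * c ^ 2 + (2 * c + 1) * k) :
    ∃ S, #S = k ∧ b = shiftedIndicator c S := by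
  have h : ∑ i, (b i - c) * (b i - c - 1) = 0 := by
    have hexp : ∀ i, (b i - c) * (b i - c - 1) = b i ^ 2 - (2 * c + 1) * b i + c * (c + 1) :=
      fun i => by ring
    simp only [hexp, sum_add_distrib, sum_sub_distrib, ← mul_sum, hsum, hsq, sum_const,
      card_univ, nsmul_eq_mul]
    ring
  obtain ⟨S, rfl⟩ := exists_eq_shiftedIndicator h
  refine ⟨S, ?_, rfl⟩
  rw [sum_shiftedIndicator] at hsum
  omega

end ShiftedIndicator

theorem kappa_eq_vecCons : kappa = vecCons 3 fun _ => -1 := by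
  ext i
  fin_cases i <;> rfl

theorem qform_vecCons (a a' : ℤ) (b b' : Fin 7 → ℤ) :
    qform (vecCons a b) (vecCons a' b') = a * a' - ∑ i, b i * b' i := by
  rw [qform, Fin.sum_univ_succ]
  simp [Fin.succ_ne_zero, sub_eq_add_neg]

theorem qform_vecCons_kappa (a : ℤ) (b : Fin 7 → ℤ) :
    qform (vecCons a b) kappa = 3 * a + ∑ i, b i := by
  simp [kappa_eq_vecCons, qform_vecCons, mul_comm a]

theorem qform_vecCons_self (a : ℤ) (b : Fin 7 → ℤ) :
    qform (vecCons a b) (vecCons a b) = a ^ 2 - ∑ i, b i ^ 2 := by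
  simp [qform_vecCons, sq]

theorem mem_Icc_of_exceptional {a : ℤ} {b : Fin 7 → ℤ} (hk : 3 * a + ∑ i, b i = -1)
    (hs : a ^ 2 - ∑ i, b i ^ 2 = -1) : a ∈ Set.Icc (-3) 0 := by
  have hcs := sq_sum_le_card_mul_sum_sq (s := univ) (f := b)
  simp only [card_univ, Fintype.card_fin, Nat.cast_ofNat] at hcs
  have : (3 * a + 1) ^ 2 ≤ 7 * (a ^ 2 + 1) := by
    rw [show 3 * a + 1 = - ∑ i, b i by linarith, neg_sq]
    linarith
  constructor <;> nlinarith

def exceptionalFamily (a c : ℤ) (k : ℕ) : Finset (Fin 8 → ℤ) :=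
  (powersetCard k univ).image fun S => vecCons a (shiftedIndicator c S)

theorem card_exceptionalFamily (a c : ℤ) (k : ℕ) : #(exceptionalFamily a c k) = Nat.choose 7 k := by
  rw [exceptionalFamily, card_image_of_injective, card_powersetCard, card_univ, Fintype.card_fin]
  intro S T h
  exact shiftedIndicator_injective c (vecCons_inj.1 h).2

theorem vecCons_mem_exceptionalFamily_iff {a a' c : ℤ} {k : ℕ} {b : Fin 7 → ℤ} :
    vecCons a b ∈ exceptionalFamily a' c k ↔
      a = a' ∧ ∑ i, b i = 7 * c + k ∧ ∑ i, b i ^ 2 = 7 * c ^ 2 + (2 * c + 1) * k := by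
  simp only [exceptionalFamily, mem_image, mem_powersetCard, subset_univ, true_and, vecCons_inj]
  constructor
  · rintro ⟨S, rfl, rfl, rfl⟩
    simp [sum_shiftedIndicator, sum_shiftedIndicator_sq]
  · rintro ⟨rfl, hsum, hsq⟩
    obtain ⟨S, hS, rfl⟩ := exists_eq_shiftedIndicator_of_sum_of_sum_sq (b := b) (c := c) (k := k)
      (by rwa [Fintype.card_fin, Nat.cast_ofNat]) (by rwa [Fintype.card_fin, Nat.cast_ofNat])
    exact ⟨S, hS, rfl, rfl⟩

theorem disjoint_exceptionalFamily {a a' c c' : ℤ} {k k' : ℕ} (h : a ≠ a') :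
    Disjoint (exceptionalFamily a c k) (exceptionalFamily a' c' k') := by
  rw [disjoint_left]
  intro v hv hv'
  rw [← cons_head_tail v, vecCons_mem_exceptionalFamily_iff] at hv hv'
  exact h (hv.1.symm.trans hv'.1)

def exceptionalFinset : Finset (Fin 8 → ℤ) :=
  (exceptionalFamily 0 (-1) 6 ∪ exceptionalFamily (-1) 0 2) ∪
    (exceptionalFamily (-2) 0 5 ∪ exceptionalFamily (-3) 1 1)

theorem card_exceptionalFinset : #exceptionalFinset = 56 := by
  rw [exceptionalFinset, card_union_of_disjoint, card_union_of_disjoint, card_union_of_disjoint]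
  · simp only [card_exceptionalFamily]
    decide
  all_goals simp [disjoint_exceptionalFamily]

theorem exceptional_iff_mem_exceptionalFinset (v : Fin 8 → ℤ) :
    qform v kappa = -1 ∧ qform v v = -1 ↔ v ∈ exceptionalFinset := by
  obtain ⟨a, b, rfl⟩ : ∃ a b, v = vecCons a b := ⟨_, _, (cons_head_tail v).symm⟩
  rw [qform_vecCons_kappa, qform_vecCons_self]
  simp only [exceptionalFinset, mem_union, vecCons_mem_exceptionalFamily_iff]
  constructor
  · rintro ⟨hk, hs⟩
    obtain ⟨ha, ha'⟩ := mem_Icc_of_exceptional hk hs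
    interval_cases a <;> omega
  · rintro (((⟨rfl, h₁, h₂⟩ | ⟨rfl, h₁, h₂⟩) | (⟨rfl, h₁, h₂⟩ | ⟨rfl, h₁, h₂⟩))) <;> omega

/-- There are exactly 56 exceptional vectors in `I^{1,7}`, corresponding to the
56 `(-1)`-curves on a degree-two del Pezzo surface. -/
theorem card_exceptional_vectors :
    {v : Fin 8 → ℤ | qform v kappa = -1 ∧ qform v v = -1}.ncard = 56 := by
  have hset : {v : Fin 8 → ℤ | qform v kappa = -1 ∧ qform v v = -1} = exceptionalFinset :=
    Set.ext exceptional_iff_mem_exceptionalFinset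
  rw [hset, Set.ncard_coe_finset, card_exceptionalFinset]
end
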